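/- Let Φ and Ψ be simply laced root systems with bases X and Y respectively, and suppose f : X → Y is a bijection preserving inner products (⟨f(x), f(x')⟩ = ⟨x, x'⟩ for all x, x' ∈ X). Then the linear map sending Σ αₓ x to Σ αₓ f(x) is a well-defined linear isometry of span(X) onto span(Y) mapping Φ onto Ψ. -/

import Mathlib

/-!
Since `X ⊆ Φ` generates `Φ` over `ℤ` and every root has norm `2`, `Φ` is exactly the set of norm-`2`
vectors of the lattice `ℤ X`: a norm-`2` lattice vector is a sum of roots (elements of `X ∪ -X`), and
it is reached from a shorter such sum by a reflection. The linear map extending `f` preserves the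
Gram matrix of the bases, hence is an isometry, and it maps `ℤ X` onto `ℤ Y`; so it maps `Φ` onto `Ψ`.
-/

open RealInnerProductSpace

variable {E F : Type*} [NormedAddCommGroup E] [InnerProductSpace ℝ E]
  [NormedAddCommGroup F] [InnerProductSpace ℝ F]

/-- A simply laced root system. -/
def IsSLRS {G : Type*} [NormedAddCommGroup G] [InnerProductSpace ℝ G] (Φ : Set G) : Prop :=
  Φ.Nonempty ∧ Φ.Finite ∧
    ∀ x ∈ Φ, ∀ y ∈ Φ,
      ⟪x, x⟫ = 2 ∧ (∃ m : ℤ, ⟪x, y⟫ = (m : ℝ)) ∧ x - ⟪x, y⟫ • y ∈ Φ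

/-- A base of a simply laced root system. -/
def IsBase {G : Type*} [NormedAddCommGroup G] [InnerProductSpace ℝ G] (Φ X : Set G) : Prop :=
  X ⊆ Φ ∧ LinearIndependent ℝ ((↑) : X → G) ∧
    (∀ x ∈ X, ∀ y ∈ X, x ≠ y → ⟪x, y⟫ ≤ 0) ∧
    ∀ v ∈ Φ, v ∈ Submodule.span ℤ X

namespace IsSLRS

variable {G : Type*} [NormedAddCommGroup G] [InnerProductSpace ℝ G] {Φ : Set G}

lemma inner_self (hΦ : IsSLRS Φ) {x : G} (hx : x ∈ Φ) : ⟪x, x⟫ = 2 :=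
  (hΦ.2.2 x hx x hx).1

lemma exists_int_inner (hΦ : IsSLRS Φ) {x y : G} (hx : x ∈ Φ) (hy : y ∈ Φ) :
    ∃ m : ℤ, ⟪x, y⟫ = m :=
  (hΦ.2.2 x hx y hy).2.1

lemma sub_inner_smul_mem (hΦ : IsSLRS Φ) {x y : G} (hx : x ∈ Φ) (hy : y ∈ Φ) :
    x - ⟪x, y⟫ • y ∈ Φ :=
  (hΦ.2.2 x hx y hy).2.2

lemma neg_mem (hΦ : IsSLRS Φ) {x : G} (hx : x ∈ Φ) : -x ∈ Φ := by
  have h := hΦ.sub_inner_smul_mem hx hx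
  rwa [hΦ.inner_self hx, two_smul, sub_add_cancel_left] at h

lemma exists_int_inner_multiset_sum (hΦ : IsSLRS Φ) {y : G} (hy : y ∈ Φ) {s : Multiset G}
    (hs : ∀ z ∈ s, z ∈ Φ) : ∃ m : ℤ, ⟪y, s.sum⟫ = m := by
  induction s using Multiset.induction_on with
  | empty => exact ⟨0, by simp⟩
  | cons z s ih =>
    obtain ⟨a, ha⟩ := hΦ.exists_int_inner hy (hs z (Multiset.mem_cons_self z s))
    obtain ⟨b, hb⟩ := ih fun w hw => hs w (Multiset.mem_cons_of_mem hw)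
    exact ⟨a + b, by rw [Multiset.sum_cons, inner_add_right, ha, hb, Int.cast_add]⟩

/-- Descent on `s`: some summand `y` has `⟪y, s.sum⟫ > 0`; by Cauchy–Schwarz either `s.sum = y`, or
`⟪y, s.sum⟫ = 1` and `s.sum` is the reflection in `y` of the shorter sum `s.sum - y`. -/
lemma multiset_sum_mem (hΦ : IsSLRS Φ) (s : Multiset G) (hs : ∀ z ∈ s, z ∈ Φ)
    (hss : ⟪s.sum, s.sum⟫ = 2) : s.sum ∈ Φ := by
  classical
  induction s using Multiset.strongInductionOn with
  | ih s ih =>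
  set v := s.sum
  obtain ⟨y, hys, hyv⟩ : ∃ y ∈ s, 0 < ⟪y, v⟫ := by
    by_contra! h
    have hsum : ⟪v, v⟫ = (s.map fun z => ⟪z, v⟫).sum := map_multiset_sum ((innerₗ G).flip v) s
    have : (s.map fun z => ⟪z, v⟫).sum ≤ 0 := by
      simpa using Multiset.sum_map_le_sum_map _ (fun _ => 0) h
    linarith
  have hy := hs y hys
  obtain ⟨k, hk⟩ := hΦ.exists_int_inner_multiset_sum hy hs
  have hvy : ⟪v - y, v - y⟫ = 4 - 2 * k := by
    rw [real_inner_sub_sub_self, hss, hΦ.inner_self hy, real_inner_comm, hk]; ring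
  have hk12 : k = 1 ∨ k = 2 := by
    have h1 : (0 : ℝ) < k := hk ▸ hyv
    have h2 : (k : ℝ) ≤ 2 := by linarith [real_inner_self_nonneg (x := v - y)]
    have : 0 < k ∧ k ≤ 2 := ⟨by exact_mod_cast h1, by exact_mod_cast h2⟩
    omega
  rcases hk12 with rfl | rfl
  · have hrest : (s.erase y).sum = v - y := eq_sub_of_add_eq' (Multiset.sum_erase hys)
    have hmem : v - y ∈ Φ := hrest ▸ ih _ (Multiset.erase_lt.mpr hys)
      (fun z hz => hs z (Multiset.mem_of_mem_erase hz)) (by rw [hrest, hvy]; norm_num)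
    have hrefl : ⟪v - y, y⟫ = -1 := by
      rw [inner_sub_left, real_inner_comm, hk, hΦ.inner_self hy]; norm_num
    simpa [hrefl] using hΦ.sub_inner_smul_mem hmem hy
  · have : v - y = 0 := by
      rw [← inner_self_eq_zero (𝕜 := ℝ), hvy]; norm_num
    rwa [sub_eq_zero.mp this]

lemma mem_of_mem_span_int (hΦ : IsSLRS Φ) {X : Set G} (hX : X ⊆ Φ) {v : G}
    (hv : v ∈ Submodule.span ℤ X) (hvv : ⟪v, v⟫ = 2) : v ∈ Φ := by
  have hv' : v ∈ AddSubmonoid.closure (X ∪ -X) := by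
    rw [← AddSubgroup.closure_toAddSubmonoid, ← Submodule.span_int_eq_addSubgroupClosure]
    exact hv
  obtain ⟨s, hs, rfl⟩ := AddSubmonoid.exists_multiset_of_mem_closure hv'
  refine hΦ.multiset_sum_mem s (fun z hz => ?_) hvv
  rcases hs z hz with hz | hz
  · exact hX hz
  · simpa using hΦ.neg_mem (hX hz)

end IsSLRS

lemma IsBase.mem_iff {G : Type*} [NormedAddCommGroup G] [InnerProductSpace ℝ G] {Φ X : Set G}
    (hΦ : IsSLRS Φ) (hX : IsBase Φ X) {v : G} :
    v ∈ Φ ↔ v ∈ Submodule.span ℤ X ∧ ⟪v, v⟫ = 2 :=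
  ⟨fun hv => ⟨hX.2.2.2 v hv, hΦ.inner_self hv⟩,
    fun hv => hΦ.mem_of_mem_span_int hX.1 hv.1 hv.2⟩

section Span

variable {G : Type*} [NormedAddCommGroup G] [InnerProductSpace ℝ G]

noncomputable def LinearIndependent.basisSpan {X : Set G}
    (hX : LinearIndependent ℝ ((↑) : X → G)) : Module.Basis X ℝ (Submodule.span ℝ X) :=
  (Module.Basis.span hX).map (LinearEquiv.ofEq _ _ (by rw [Subtype.range_coe]))

@[simp]
lemma LinearIndependent.coe_basisSpan {X : Set G} (hX : LinearIndependent ℝ ((↑) : X → G))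
    (x : X) : (hX.basisSpan x : G) = x := by
  simp [LinearIndependent.basisSpan, Module.Basis.span_apply]

end Span

lemma exists_linearIsometryEquiv_span_of_bijOn {X : Set E} {Y : Set F}
    (hX : LinearIndependent ℝ ((↑) : X → E)) (hY : LinearIndependent ℝ ((↑) : Y → F))
    {f : E → F} (hf : Set.BijOn f X Y) (hinner : ∀ x ∈ X, ∀ x' ∈ X, ⟪f x, f x'⟫ = ⟪x, x'⟫) :
    ∃ T : Submodule.span ℝ X ≃ₗᵢ[ℝ] Submodule.span ℝ Y,
      ∀ x (hx : x ∈ X), (T ⟨x, Submodule.subset_span hx⟩ : F) = f x := by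
  let T := hX.basisSpan.equiv hY.basisSpan (hf.equiv f)
  have hT : ∀ x : X, (T (hX.basisSpan x) : F) = f x := fun x => by
    simp [T, Module.Basis.equiv_apply, Set.BijOn.equiv]
  have hTinner : (innerₗ _).compl₁₂ T.toLinearMap T.toLinearMap = innerₗ (Submodule.span ℝ X) :=
    LinearMap.ext_basis hX.basisSpan hX.basisSpan fun x x' => by
      simpa [Submodule.coe_inner, hT] using hinner x x.2 x' x'.2
  refine ⟨T.isometryOfInner fun u v => LinearMap.congr_fun₂ hTinner u v, fun x hx => ?_⟩
  have hx' : (⟨x, Submodule.subset_span hx⟩ : Submodule.span ℝ X) = hX.basisSpan ⟨x, hx⟩ :=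
    Subtype.ext (hX.coe_basisSpan ⟨x, hx⟩).symm
  rw [hx']
  exact hT ⟨x, hx⟩

lemma apply_mem_span_int_of_mapsTo {X : Set E} {Y : Set F} (g : Submodule.span ℝ X →ₗ[ℝ] F)
    (hg : ∀ x (hx : x ∈ X), g ⟨x, Submodule.subset_span hx⟩ ∈ Y) (u : Submodule.span ℝ X)
    (hu : (u : E) ∈ Submodule.span ℤ X) : g u ∈ Submodule.span ℤ Y := by
  have hR := Submodule.span_le_restrictScalars ℤ ℝ X
  obtain ⟨v, hv⟩ := u
  change v ∈ _ at hu
  induction hu using Submodule.span_induction with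
  | mem x hx => exact Submodule.subset_span (hg x hx)
  | zero => exact (map_zero g).symm ▸ zero_mem _
  | add a b ha hb iha ihb =>
    exact (map_add g ⟨a, hR ha⟩ ⟨b, hR hb⟩).symm ▸ add_mem (iha (hR ha)) (ihb (hR hb))
  | smul n a ha iha =>
    exact (map_zsmul g n ⟨a, hR ha⟩).symm ▸ Submodule.smul_mem _ n (iha (hR ha))

lemma mem_span_int_iff_of_bijOn {X : Set E} {Y : Set F} {f : E → F} (hf : Set.BijOn f X Y)
    (T : Submodule.span ℝ X ≃ₗ[ℝ] Submodule.span ℝ Y)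
    (hT : ∀ x (hx : x ∈ X), (T ⟨x, Submodule.subset_span hx⟩ : F) = f x) (u : Submodule.span ℝ X) :
    (u : E) ∈ Submodule.span ℤ X ↔ (T u : F) ∈ Submodule.span ℤ Y := by
  refine ⟨apply_mem_span_int_of_mapsTo ((Submodule.span ℝ Y).subtype ∘ₗ T.toLinearMap)
    (fun x hx => by simpa [hT x hx] using hf.mapsTo hx) u, fun h => ?_⟩
  have hTsymm : ∀ y (hy : y ∈ Y), (T.symm ⟨y, Submodule.subset_span hy⟩ : E) ∈ X := by
    intro y hy
    obtain ⟨x, hx, rfl⟩ := hf.surjOn hy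
    rw [show (⟨f x, _⟩ : Submodule.span ℝ Y) = T ⟨x, Submodule.subset_span hx⟩ from
      Subtype.ext (hT x hx).symm, T.symm_apply_apply]
    exact hx
  simpa using apply_mem_span_int_of_mapsTo ((Submodule.span ℝ X).subtype ∘ₗ T.symm.toLinearMap)
    hTsymm (T u) h

theorem base_bijection_extends_to_isometry {Φ : Set E} {Ψ : Set F} {X : Set E} {Y : Set F}
    (hΦ : IsSLRS Φ) (hΨ : IsSLRS Ψ) (hX : IsBase Φ X) (hY : IsBase Ψ Y)
    (f : E → F) (hbij : Set.BijOn f X Y)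
    (hinner : ∀ x ∈ X, ∀ x' ∈ X, ⟪f x, f x'⟫ = ⟪x, x'⟫) :
    ∃ T : (Submodule.span ℝ X) ≃ₗᵢ[ℝ] (Submodule.span ℝ Y),
      (∀ x (hx : x ∈ X), (T ⟨x, Submodule.subset_span hx⟩ : F) = f x) ∧
      (∀ v (hv : v ∈ Submodule.span ℝ X), (v ∈ Φ ↔ (T ⟨v, hv⟩ : F) ∈ Ψ)) := by
  obtain ⟨T, hT⟩ := exists_linearIsometryEquiv_span_of_bijOn hX.2.1 hY.2.1 hbij hinner
  refine ⟨T, hT, fun v hv => ?_⟩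
  have hnorm : ⟪(T ⟨v, hv⟩ : F), T ⟨v, hv⟩⟫ = ⟪v, v⟫ := T.inner_map_map ⟨v, hv⟩ ⟨v, hv⟩
  rw [hX.mem_iff hΦ, hY.mem_iff hΨ, hnorm,
    mem_span_int_iff_of_bijOn hbij T.toLinearEquiv hT ⟨v, hv⟩]
  rfl
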